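/- Let g : ℝ → ℝ be continuous and λ > 0 with g(r) = 0 for all r ≥ λ/2, and let τ(u,v) = σ_{2π·g(‖u‖)}(u,v) for (u,v) ∈ T with u ≠ 0. Define Ψ : [0,1] × (T ∖ {u = 0}) → T ∖ {u = 0} by Ψ(t,(u,v)) = σ_{4πt·g(‖u‖)}(u,v). Then Ψ is continuous, Ψ(0,·) is the identity, Ψ(1,·) = τ∘τ, and Ψ(t,(u,v)) = (u,v) whenever ‖u‖ ≥ λ/2. Hence the square of the model Dehn twist restricted to the complement of the zero section is isotopic to the identity through compactly supported maps. -/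

import Mathlib

/-- The normalized geodesic flow on the standard model `T*S² ⊂ ℝ³ × ℝ³`. -/
noncomputable def geoFlow (t : ℝ)
    (p : EuclideanSpace ℝ (Fin 3) × EuclideanSpace ℝ (Fin 3)) :
    EuclideanSpace ℝ (Fin 3) × EuclideanSpace ℝ (Fin 3) :=
  (Real.cos t • p.1 - (Real.sin t * ‖p.1‖) • p.2,
   Real.cos t • p.2 + (Real.sin t / ‖p.1‖) • p.1)

/-- The complement of the zero section in the standard model of `T*S²`. -/
def cotangentS2offZero : Set (EuclideanSpace ℝ (Fin 3) × EuclideanSpace ℝ (Fin 3)) :=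
  {p | inner ℝ p.1 p.2 = (0 : ℝ) ∧ ‖p.2‖ = 1 ∧ p.1 ≠ 0}

/-- The model Dehn twist off the zero section, `τ(p) = σ_{2π g(‖u‖)}(p)`. -/
noncomputable def twistOffZero (g : ℝ → ℝ)
    (p : EuclideanSpace ℝ (Fin 3) × EuclideanSpace ℝ (Fin 3)) :
    EuclideanSpace ℝ (Fin 3) × EuclideanSpace ℝ (Fin 3) :=
  geoFlow (2 * Real.pi * g ‖p.1‖) p

/-- The isotopy `Ψ(t,p) = σ_{4πt g(‖u‖)}(p)` between the identity and the squared twist. -/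
noncomputable def twistIsotopy (g : ℝ → ℝ) (t : ℝ)
    (p : EuclideanSpace ℝ (Fin 3) × EuclideanSpace ℝ (Fin 3)) :
    EuclideanSpace ℝ (Fin 3) × EuclideanSpace ℝ (Fin 3) :=
  geoFlow (4 * Real.pi * t * g ‖p.1‖) p

/-!
On `T`, the map `σ_t` rotates the orthonormal pair `(u/‖u‖, v)` by the angle `t` and keeps `‖u‖`,
so it preserves `T` and satisfies `σ_s ∘ σ_t = σ_{s+t}`. Since `τ` preserves
`‖u‖`, the two twists add up: `τ ∘ τ = σ_{4π g(‖u‖)}`, and `Ψ` interpolates from `σ_0 = id` by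
scaling the time. Off the zero section the flow is jointly continuous, and `Ψ` is the identity
wherever `g(‖u‖) = 0`.
-/

open Real

section GeoFlow

variable {p : EuclideanSpace ℝ (Fin 3) × EuclideanSpace ℝ (Fin 3)}

lemma geoFlow_zero : geoFlow 0 p = p := by
  simp [geoFlow]

lemma norm_fst_geoFlow (t : ℝ) (h0 : inner ℝ p.1 p.2 = (0 : ℝ)) (hv : ‖p.2‖ = 1) :
    ‖(geoFlow t p).1‖ = ‖p.1‖ := by
  have h : ‖(geoFlow t p).1‖ ^ 2 = ‖p.1‖ ^ 2 := by
    rw [geoFlow, norm_sub_sq_real]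
    simp [norm_smul, inner_smul_left, inner_smul_right, h0, hv, mul_pow, sq_abs]
    nlinarith [sin_sq_add_cos_sq t]
  exact (sq_eq_sq₀ (norm_nonneg _) (norm_nonneg _)).1 h

lemma norm_snd_geoFlow (t : ℝ) (h0 : inner ℝ p.1 p.2 = (0 : ℝ)) (hv : ‖p.2‖ = 1)
    (hu : p.1 ≠ 0) : ‖(geoFlow t p).2‖ = 1 := by
  have hne : ‖p.1‖ ≠ 0 := norm_ne_zero_iff.mpr hu
  have h : ‖(geoFlow t p).2‖ ^ 2 = 1 ^ 2 := by
    have h0' : inner ℝ p.2 p.1 = (0 : ℝ) := by rwa [real_inner_comm]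
    rw [geoFlow, norm_add_sq_real]
    simp [norm_smul, inner_smul_left, inner_smul_right, h0', hv, mul_pow, sq_abs, div_pow]
    field_simp
    exact cos_sq_add_sin_sq t
  exact (sq_eq_sq₀ (norm_nonneg _) zero_le_one).1 h

lemma inner_geoFlow (t : ℝ) (h0 : inner ℝ p.1 p.2 = (0 : ℝ)) (hv : ‖p.2‖ = 1)
    (hu : p.1 ≠ 0) : inner ℝ (geoFlow t p).1 (geoFlow t p).2 = (0 : ℝ) := by
  have hne : ‖p.1‖ ≠ 0 := norm_ne_zero_iff.mpr hu
  have h0' : inner ℝ p.2 p.1 = (0 : ℝ) := by rwa [real_inner_comm]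
  rw [geoFlow, inner_sub_left, inner_add_right, inner_add_right]
  simp only [inner_smul_left, inner_smul_right, real_inner_self_eq_norm_sq, h0, h0', hv,
    RCLike.conj_to_real]
  field_simp
  ring

lemma geoFlow_mem_cotangentS2offZero (t : ℝ) (hp : p ∈ cotangentS2offZero) :
    geoFlow t p ∈ cotangentS2offZero := by
  obtain ⟨h0, hv, hu⟩ := hp
  refine ⟨inner_geoFlow t h0 hv hu, norm_snd_geoFlow t h0 hv hu, ?_⟩
  rw [← norm_ne_zero_iff, norm_fst_geoFlow t h0 hv]
  exact norm_ne_zero_iff.mpr hu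

lemma geoFlow_geoFlow (s t : ℝ) (h0 : inner ℝ p.1 p.2 = (0 : ℝ)) (hv : ‖p.2‖ = 1)
    (hu : p.1 ≠ 0) : geoFlow s (geoFlow t p) = geoFlow (s + t) p := by
  have hne : ‖p.1‖ ≠ 0 := norm_ne_zero_iff.mpr hu
  have hn := norm_fst_geoFlow t h0 hv
  rw [geoFlow, hn]
  simp only [geoFlow, cos_add, sin_add, Prod.mk.injEq]
  constructor <;> match_scalars <;> field_simp <;> ring

lemma continuousOn_geoFlow :
    ContinuousOn (fun q : ℝ × (EuclideanSpace ℝ (Fin 3) × EuclideanSpace ℝ (Fin 3)) =>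
      geoFlow q.1 q.2) {q | q.2.1 ≠ 0} := by
  have hne : ∀ q ∈ {q : ℝ × (EuclideanSpace ℝ (Fin 3) × EuclideanSpace ℝ (Fin 3)) |
      q.2.1 ≠ 0}, ‖q.2.1‖ ≠ 0 := fun q hq => norm_ne_zero_iff.mpr hq
  refine (Continuous.continuousOn (by fun_prop)).prodMk
    ((Continuous.continuousOn (by fun_prop)).add ?_)
  exact ((Continuous.continuousOn (by fun_prop)).div (by fun_prop) hne).smul
    (Continuous.continuousOn (by fun_prop))

end GeoFlow

section Twist

variable {g : ℝ → ℝ}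

lemma continuousOn_twistIsotopy (hg : Continuous g) :
    ContinuousOn (fun q : ℝ × (EuclideanSpace ℝ (Fin 3) × EuclideanSpace ℝ (Fin 3)) =>
      twistIsotopy g q.1 q.2) {q | q.2.1 ≠ 0} := by
  have hf : Continuous fun q : ℝ × (EuclideanSpace ℝ (Fin 3) × EuclideanSpace ℝ (Fin 3)) =>
      (4 * π * q.1 * g ‖q.2.1‖, q.2) := by fun_prop
  exact (continuousOn_geoFlow.comp hf.continuousOn fun _ hq => hq :)

lemma twistIsotopy_zero (p : EuclideanSpace ℝ (Fin 3) × EuclideanSpace ℝ (Fin 3)) :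
    twistIsotopy g 0 p = p := by
  simp [twistIsotopy, geoFlow_zero]

lemma twistIsotopy_one {p : EuclideanSpace ℝ (Fin 3) × EuclideanSpace ℝ (Fin 3)}
    (hp : p ∈ cotangentS2offZero) : twistIsotopy g 1 p = twistOffZero g (twistOffZero g p) := by
  obtain ⟨h0, hv, hu⟩ := hp
  rw [twistOffZero, twistOffZero, norm_fst_geoFlow _ h0 hv, geoFlow_geoFlow _ _ h0 hv hu,
    twistIsotopy]
  ring_nf

lemma twistIsotopy_of_apply_eq_zero {t : ℝ}
    {p : EuclideanSpace ℝ (Fin 3) × EuclideanSpace ℝ (Fin 3)} (hgp : g ‖p.1‖ = 0) :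
    twistIsotopy g t p = p := by
  simp [twistIsotopy, hgp, geoFlow_zero]

end Twist

theorem squared_twist_isotopic_to_id_general (g : ℝ → ℝ) (hg : Continuous g)
    (lam : ℝ) (hg0 : ∀ r : ℝ, lam / 2 ≤ r → g r = 0) :
    ContinuousOn (fun q : ℝ × (EuclideanSpace ℝ (Fin 3) × EuclideanSpace ℝ (Fin 3)) =>
        twistIsotopy g q.1 q.2) (Set.Icc (0 : ℝ) 1 ×ˢ cotangentS2offZero) ∧
    (∀ t ∈ Set.Icc (0 : ℝ) 1, ∀ p ∈ cotangentS2offZero,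
        twistIsotopy g t p ∈ cotangentS2offZero) ∧
    (∀ p ∈ cotangentS2offZero, twistIsotopy g 0 p = p) ∧
    (∀ p ∈ cotangentS2offZero, twistIsotopy g 1 p = twistOffZero g (twistOffZero g p)) ∧
    (∀ t ∈ Set.Icc (0 : ℝ) 1, ∀ p ∈ cotangentS2offZero,
        lam / 2 ≤ ‖p.1‖ → twistIsotopy g t p = p) :=
  ⟨(continuousOn_twistIsotopy hg).mono fun _ hq => hq.2.2.2,
    fun _ _ _ hp => geoFlow_mem_cotangentS2offZero _ hp,
    fun p _ => twistIsotopy_zero p,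
    fun _ hp => twistIsotopy_one hp,
    fun _ _ _ _ hle => twistIsotopy_of_apply_eq_zero (hg0 _ hle)⟩

/-- **The squared model Dehn twist is isotopic to the identity away from the zero
section**, through an isotopy supported in `‖u‖ < λ/2`. -/
theorem squared_twist_isotopic_to_id (g : ℝ → ℝ) (hg : Continuous g)
    (lam : ℝ) (hlam : 0 < lam) (hg0 : ∀ r : ℝ, lam / 2 ≤ r → g r = 0) :
    ContinuousOn (fun q : ℝ × (EuclideanSpace ℝ (Fin 3) × EuclideanSpace ℝ (Fin 3)) =>
        twistIsotopy g q.1 q.2) (Set.Icc (0 : ℝ) 1 ×ˢ cotangentS2offZero) ∧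
    (∀ t ∈ Set.Icc (0 : ℝ) 1, ∀ p ∈ cotangentS2offZero,
        twistIsotopy g t p ∈ cotangentS2offZero) ∧
    (∀ p ∈ cotangentS2offZero, twistIsotopy g 0 p = p) ∧
    (∀ p ∈ cotangentS2offZero, twistIsotopy g 1 p = twistOffZero g (twistOffZero g p)) ∧
    (∀ t ∈ Set.Icc (0 : ℝ) 1, ∀ p ∈ cotangentS2offZero,
        lam / 2 ≤ ‖p.1‖ → twistIsotopy g t p = p) :=
  squared_twist_isotopic_to_id_general g hg lam hg0
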